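/- The 1-norm condition number of the matrix 𝓕'_rec, the rec-DerSol Jacobian of the third-order implicit Taylor method for y' = −y/ε with Δt = 1, grows like ε^{−2}: there exist positive constants c₁, c₂, ε₀ such that c₁/ε² ≤ cond₁(𝓕'_rec) ≤ c₂/ε² for all 0 < ε ≤ ε₀. -/

import Mathlib

/-- Operator norm induced by the ℓ¹ vector norm: maximum absolute column sum. -/
noncomputable def colNorm {n : Type*} [Fintype n] [Nonempty n] (A : Matrix n n ℝ) : ℝ :=
  Finset.univ.sup' Finset.univ_nonempty (fun j => ∑ i, |A i j|)

/-- 1-norm condition number. -/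
noncomputable def cond1 {n : Type*} [Fintype n] [Nonempty n] [DecidableEq n]
    (A : Matrix n n ℝ) : ℝ :=
  colNorm A * colNorm A⁻¹

/-- The rec-DerSol Jacobian of the third-order implicit Taylor method for
`y' = -y/ε` with `Δt = 1`. -/
noncomputable def Frec (eps : ℝ) : Matrix (Fin 4) (Fin 4) ℝ :=
  !![1, -1, 1 / 2, -1 / 6;
     -1 / eps, -1, 0, 0;
     0, -1 / eps, -1, 0;
     0, 1 / eps ^ 2, 0, -1]

/-!
The ℓ¹ norm of `Frec ε` is governed by its entry `1/ε²`: every entry is at most `1/ε²` in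
absolute value for `ε ≤ 1`, and one attains it. The inverse is explicit,
`(1 + 3ε + 6ε² + 6ε³)⁻¹ • N(ε)` with a polynomial matrix `N(ε)`; its entries are bounded by `6`
and its `(3, 0)` entry is `-6 / (1 + 3ε + 6ε² + 6ε³)`, so `‖(Frec ε)⁻¹‖₁` stays between two
positive constants for `0 < ε ≤ 1`.
-/

section ColNorm

variable {n : Type*} [Fintype n] [Nonempty n]

theorem abs_le_colNorm (A : Matrix n n ℝ) (i j : n) : |A i j| ≤ colNorm A :=
  (Finset.single_le_sum (f := fun i => |A i j|) (fun _ _ => abs_nonneg _)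
    (Finset.mem_univ i)).trans (Finset.le_sup' (fun j => ∑ i, |A i j|) (Finset.mem_univ j))

theorem colNorm_le_of_abs_le {A : Matrix n n ℝ} {M : ℝ} (hA : ∀ i j, |A i j| ≤ M) :
    colNorm A ≤ Fintype.card n * M :=
  Finset.sup'_le _ _ fun j _ => by
    simpa using Finset.sum_le_sum fun i (_ : i ∈ Finset.univ) => hA i j

end ColNorm

noncomputable def frecDenom (eps : ℝ) : ℝ := 6 * eps ^ 3 + 6 * eps ^ 2 + 3 * eps + 1

noncomputable def FrecInv (eps : ℝ) : Matrix (Fin 4) (Fin 4) ℝ :=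
  (frecDenom eps)⁻¹ •
    !![6 * eps ^ 3, -(6 * eps ^ 3 + 3 * eps ^ 2 + eps), 3 * eps ^ 3, -eps ^ 3;
       -6 * eps ^ 2, -6 * eps ^ 3, -3 * eps ^ 2, eps ^ 2;
       6 * eps, 6 * eps ^ 2, -(6 * eps ^ 3 + 6 * eps ^ 2 + 1), -eps;
       -6, -6 * eps, -3, -(6 * eps ^ 3 + 6 * eps ^ 2 + 3 * eps)]

section FrecBounds

variable {eps : ℝ}

theorem one_le_frecDenom (h : 0 ≤ eps) : 1 ≤ frecDenom eps := by
  unfold frecDenom; nlinarith [pow_nonneg h 2, pow_nonneg h 3]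

theorem frecDenom_le_sixteen (h₀ : 0 ≤ eps) (h₁ : eps ≤ 1) : frecDenom eps ≤ 16 := by
  unfold frecDenom; nlinarith [pow_le_one₀ h₀ h₁ (n := 2), pow_le_one₀ h₀ h₁ (n := 3)]

theorem Frec_mul_FrecInv (h : 0 < eps) : Frec eps * FrecInv eps = 1 := by
  have hD : frecDenom eps ≠ 0 := (zero_lt_one.trans_le (one_le_frecDenom h.le)).ne'
  unfold frecDenom at hD
  have := h.ne'
  ext i j
  fin_cases i <;> fin_cases j <;>
    simp [Frec, FrecInv, frecDenom, Matrix.mul_apply, Fin.sum_univ_four] <;>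
    field_simp <;> ring

theorem inv_Frec (h : 0 < eps) : (Frec eps)⁻¹ = FrecInv eps :=
  Matrix.inv_eq_right_inv (Frec_mul_FrecInv h)

theorem abs_FrecInv_le (h : 0 < eps) (i j : Fin 4) : |FrecInv eps i j| ≤ 6 := by
  have hD := one_le_frecDenom h.le
  have h2 := pow_pos h 2
  have h3 := pow_pos h 3
  rw [FrecInv, Matrix.smul_apply, smul_eq_mul, abs_mul, abs_inv,
    abs_of_pos (zero_lt_one.trans_le hD), inv_mul_le_iff₀ (zero_lt_one.trans_le hD)]
  unfold frecDenom at hD ⊢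
  fin_cases i <;> fin_cases j <;> simp [abs_le, abs_of_pos h] <;> (try constructor) <;> nlinarith

theorem abs_Frec_le (h₀ : 0 < eps) (h₁ : eps ≤ 1) (i j : Fin 4) :
    |Frec eps i j| ≤ 1 / eps ^ 2 := by
  have ha : 1 ≤ 1 / eps := by rw [le_div_iff₀ h₀]; linarith
  have hb : 1 / eps ≤ 1 / eps ^ 2 := by
    rw [div_le_div_iff₀ h₀ (pow_pos h₀ 2)]; nlinarith
  fin_cases i <;> fin_cases j <;> simp [Frec, abs_div, abs_of_pos h₀] <;>
    first | positivity | (simp only [one_div] at ha hb; linarith)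

theorem colNorm_Frec_le (h₀ : 0 < eps) (h₁ : eps ≤ 1) : colNorm (Frec eps) ≤ 4 / eps ^ 2 := by
  simpa [div_eq_mul_inv] using colNorm_le_of_abs_le (abs_Frec_le h₀ h₁)

theorem one_div_sq_le_colNorm_Frec (h : 0 < eps) : 1 / eps ^ 2 ≤ colNorm (Frec eps) := by
  simpa [Frec, abs_of_pos h] using abs_le_colNorm (Frec eps) 3 1

theorem colNorm_FrecInv_le (h : 0 < eps) : colNorm (FrecInv eps) ≤ 24 := by
  simpa using (colNorm_le_of_abs_le (abs_FrecInv_le h)).trans_eq (by norm_num)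

theorem three_eighths_le_colNorm_FrecInv (h₀ : 0 < eps) (h₁ : eps ≤ 1) :
    3 / 8 ≤ colNorm (FrecInv eps) := by
  have hD := frecDenom_le_sixteen h₀.le h₁
  have hD₀ := zero_lt_one.trans_le (one_le_frecDenom h₀.le)
  calc (3 : ℝ) / 8 ≤ 6 / frecDenom eps := by rw [le_div_iff₀ hD₀]; linarith
    _ = |FrecInv eps 3 0| := by simp [FrecInv, abs_of_pos hD₀, div_eq_inv_mul]
    _ ≤ colNorm (FrecInv eps) := abs_le_colNorm _ 3 0

end FrecBounds

theorem stmt_16 :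
    ∃ c₁ c₂ eps₀ : ℝ, 0 < c₁ ∧ 0 < c₂ ∧ 0 < eps₀ ∧
      ∀ eps : ℝ, 0 < eps → eps ≤ eps₀ →
        c₁ / eps ^ 2 ≤ cond1 (Frec eps) ∧ cond1 (Frec eps) ≤ c₂ / eps ^ 2 := by
  refine ⟨3 / 8, 96, 1, by norm_num, by norm_num, one_pos, fun eps h₀ h₁ => ?_⟩
  have hA₁ := one_div_sq_le_colNorm_Frec h₀
  have hB₁ := three_eighths_le_colNorm_FrecInv h₀ h₁
  rw [cond1, inv_Frec h₀]
  constructor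
  · calc 3 / 8 / eps ^ 2 = 1 / eps ^ 2 * (3 / 8) := by ring
      _ ≤ colNorm (Frec eps) * colNorm (FrecInv eps) :=
        mul_le_mul hA₁ hB₁ (by norm_num) ((by positivity : (0:ℝ) ≤ 1 / eps ^ 2).trans hA₁)
  · calc colNorm (Frec eps) * colNorm (FrecInv eps) ≤ 4 / eps ^ 2 * 24 :=
          mul_le_mul (colNorm_Frec_le h₀ h₁) (colNorm_FrecInv_le h₀)
            (by linarith) (by positivity)
      _ = 96 / eps ^ 2 := by ring
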